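/- arXiv:2411.01017 — 6 statements merged into one kernel-verified Lean document; each statement's English description precedes it below -/
import Mathlib

section
/- Let (A,d) be a bounded metric space, I = [I_min, I_max], and P : A → I a 1-Lipschitz function with respect to d. Suppose φ : A → ℝ satisfies ‖P − φ‖_∞ < ε. Define φ^I(x) = max(I_min, min(I_max, φ(x))) and φ*(x) = inf over y of (φ^I(y) + d(x,y)). Then ‖P − φ*‖_∞ ≤ 2ε. -/
theorem regularization_close {A : Type*} [MetricSpace A] [Nonempty A]
    (hd : ∃ C, ∀ x y : A, dist x y ≤ C)
    (Imin Imax : ℝ) (hI : Imin ≤ Imax)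
    (P : A → ℝ) (hPI : ∀ x, P x ∈ Set.Icc Imin Imax)
    (hPlip : ∀ x y : A, |P x - P y| ≤ dist x y)
    (φ : A → ℝ) (ε : ℝ) (hε : 0 < ε)
    (hclose : ∀ x, |P x - φ x| < ε) :
    ∀ x : A,
      |P x - (⨅ z, (max Imin (min Imax (φ z)) + dist x z))| ≤ 2 * ε := by
  intro x
  set ψ : A → ℝ := fun z => max Imin (min Imax (φ z)) with hψ
  have hψclose : ∀ z, |P z - ψ z| ≤ ε := by
    intro z
    obtain ⟨h1, h2⟩ := hPI z
    have h := hclose z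
    have habs := abs_lt.1 h
    simp only [hψ]
    rw [abs_le]
    constructor
    · rcases le_total Imin (min Imax (φ z)) with hc | hc
      · rw [max_eq_right hc]
        rcases le_total Imax (φ z) with hm | hm
        · rw [min_eq_left hm]; linarith
        · rw [min_eq_right hm]; linarith [habs.1]
      · rw [max_eq_left hc]; linarith
    · rcases le_total Imin (min Imax (φ z)) with hc | hc
      · rw [max_eq_right hc]
        rcases le_total Imax (φ z) with hm | hm
        · rw [min_eq_left hm]; linarith
        · rw [min_eq_right hm]; linarith [habs.2]
      · rw [max_eq_left hc]
        rcases le_total Imax (φ z) with hm | hm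
        · rw [min_eq_left hm] at hc; linarith
        · rw [min_eq_right hm] at hc; linarith [habs.2]
  have hbdd : BddBelow (Set.range fun z => ψ z + dist x z) := by
    refine ⟨Imin, ?_⟩
    rintro _ ⟨z, rfl⟩
    have : Imin ≤ ψ z := le_max_left _ _
    have := dist_nonneg (x := x) (y := z)
    dsimp; linarith
  have hub : (⨅ z, ψ z + dist x z) ≤ P x + ε := by
    have := ciInf_le hbdd x
    simp only [dist_self, add_zero] at this
    have h := hψclose x
    rw [abs_le] at h
    linarith [h.1]
  have hlb : P x - ε ≤ ⨅ z, ψ z + dist x z := by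
    apply le_ciInf
    intro z
    have h := hψclose z
    rw [abs_le] at h
    have hl := hPlip x z
    rw [abs_le] at hl
    linarith [h.2, hl.2]
  rw [abs_le]
  constructor <;> linarith
end

section
/- Let X be a nonempty set and F, G : X → [0,1] functions such that for every ε > 0 there exists δ > 0 such that for all x ∈ X, F(x) ≤ δ implies G(x) ≤ ε. Then there exists a continuous increasing function α : [0,1] → [0,1] with α(0) = 0 such that G(x) ≤ α(F(x)) for all x ∈ X. -/
theorem henson_modulus {X : Type*} [Nonempty X] (F G : X → ℝ)
    (hF : ∀ x, F x ∈ Set.Icc (0:ℝ) 1) (hG : ∀ x, G x ∈ Set.Icc (0:ℝ) 1)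
    (h : ∀ ε > (0:ℝ), ∃ δ > (0:ℝ), ∀ x, F x ≤ δ → G x ≤ ε) :
    ∃ α : ℝ → ℝ, ContinuousOn α (Set.Icc 0 1) ∧ MonotoneOn α (Set.Icc 0 1) ∧
      α 0 = 0 ∧ (∀ t ∈ Set.Icc (0:ℝ) 1, α t ∈ Set.Icc (0:ℝ) 1) ∧
      (∀ x, G x ≤ α (F x)) := by
  -- choose moduli
  have hd : ∀ n : ℕ, ∃ δ > (0:ℝ), ∀ x, F x ≤ δ → G x ≤ (2:ℝ)⁻¹ ^ (n + 1) :=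
    fun n => h _ (by positivity)
  choose d hdpos hdspec using hd
  -- antitone version
  set δ : ℕ → ℝ := fun n => Nat.rec (d 0) (fun k ih => min ih (d (k + 1))) n with hδdef
  have hδsucc : ∀ n, δ (n + 1) = min (δ n) (d (n + 1)) := fun n => rfl
  have hδd : ∀ n, δ n ≤ d n := by
    intro n
    cases n with
    | zero => exact le_rfl
    | succ k => rw [hδsucc]; exact min_le_right _ _
  have hδpos : ∀ n, 0 < δ n := by
    intro n
    induction n with
    | zero => exact hdpos 0
    | succ k ih => rw [hδsucc]; exact lt_min ih (hdpos (k + 1))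
  have hδanti : Antitone δ := by
    apply antitone_nat_of_succ_le
    intro n
    rw [hδsucc]; exact min_le_left _ _
  -- the modulus
  set f : ℕ → ℝ → ℝ := fun n t => (2:ℝ)⁻¹ ^ n * min 1 (max 0 t / δ n) with hfdef
  set α : ℝ → ℝ := fun t => 2⁻¹ * ∑' n, f n t with hαdef
  have hsummgeo : Summable (fun n : ℕ => (2:ℝ)⁻¹ ^ n) :=
    summable_geometric_of_lt_one (by norm_num) (by norm_num)
  have htsumgeo : ∑' n : ℕ, (2:ℝ)⁻¹ ^ n = 2 := by
    rw [tsum_geometric_of_lt_one (by norm_num) (by norm_num)]; norm_num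
  have hf01 : ∀ n t, 0 ≤ f n t ∧ f n t ≤ (2:ℝ)⁻¹ ^ n := by
    intro n t
    constructor
    · apply mul_nonneg (by positivity)
      exact le_min (by norm_num) (div_nonneg (le_max_left _ _) (hδpos n).le)
    · have : min 1 (max 0 t / δ n) ≤ 1 := min_le_left _ _
      calc f n t ≤ (2:ℝ)⁻¹ ^ n * 1 := by
            apply mul_le_mul_of_nonneg_left this (by positivity)
        _ = (2:ℝ)⁻¹ ^ n := mul_one _
  have hsumm : ∀ t, Summable (fun n => f n t) := by
    intro t
    apply Summable.of_nonneg_of_le (fun n => (hf01 n t).1) (fun n => (hf01 n t).2) hsummgeo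
  have hmono : Monotone α := by
    intro s t hst
    apply mul_le_mul_of_nonneg_left _ (by norm_num)
    apply Summable.tsum_le_tsum _ (hsumm s) (hsumm t)
    intro n
    apply mul_le_mul_of_nonneg_left _ (by positivity)
    apply min_le_min le_rfl
    exact div_le_div_of_nonneg_right (max_le_max le_rfl hst) (hδpos n).le
  have hα0 : α 0 = 0 := by
    have : ∀ n, f n 0 = 0 := by
      intro n
      simp [hfdef, max_self, min_eq_right, (hδpos n).le, le_of_lt (hδpos n)]
    simp [hαdef, this]
  have hαnonneg : ∀ t, 0 ≤ α t := by
    intro t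
    apply mul_nonneg (by norm_num)
    exact tsum_nonneg fun n => (hf01 n t).1
  have hαle1 : ∀ t, α t ≤ 1 := by
    intro t
    have : ∑' n, f n t ≤ ∑' n : ℕ, (2:ℝ)⁻¹ ^ n :=
      Summable.tsum_le_tsum (fun n => (hf01 n t).2) (hsumm t) hsummgeo
    rw [htsumgeo] at this
    calc α t ≤ 2⁻¹ * 2 := mul_le_mul_of_nonneg_left this (by norm_num)
      _ = 1 := by norm_num
  have hcont : Continuous α := by
    apply Continuous.mul continuous_const
    apply continuous_tsum (u := fun n : ℕ => (2:ℝ)⁻¹ ^ n) _ hsummgeo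
    · intro n t
      rw [Real.norm_eq_abs, abs_of_nonneg (hf01 n t).1]
      exact (hf01 n t).2
    · intro n
      apply Continuous.mul continuous_const
      apply Continuous.min continuous_const
      exact ((continuous_const.max continuous_id).div continuous_const
        fun _ => (hδpos n).ne')
  refine ⟨α, hcont.continuousOn, hmono.monotoneOn _, hα0,
    fun t _ => ⟨hαnonneg t, hαle1 t⟩, ?_⟩
  intro x
  by_cases hall : ∀ n, F x ≤ δ n
  · -- G x ≤ 0
    have hGle : ∀ n : ℕ, G x ≤ (2:ℝ)⁻¹ ^ (n + 1) := fun n =>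
      hdspec n x (le_trans (hall n) (hδd n))
    have : G x ≤ 0 := by
      have htend : Filter.Tendsto (fun n : ℕ => (2:ℝ)⁻¹ ^ (n + 1)) Filter.atTop (nhds 0) := by
        have := tendsto_pow_atTop_nhds_zero_of_lt_one (r := (2:ℝ)⁻¹) (by norm_num) (by norm_num)
        exact this.comp (Filter.tendsto_add_atTop_nat 1)
      exact ge_of_tendsto' htend hGle
    exact this.trans (hαnonneg _)
  · push_neg at hall
    set m := Nat.find hall with hm
    have hmspec : δ m < F x := Nat.find_spec hall
    -- G x ≤ 2⁻¹ ^ m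
    have hGm : G x ≤ (2:ℝ)⁻¹ ^ m := by
      cases hmeq : m with
      | zero => simpa using (hG x).2
      | succ k =>
        have hk : F x ≤ δ k := not_lt.mp (Nat.find_min hall (by omega))
        exact hdspec k x (hk.trans (hδd k))
    -- α (F x) ≥ 2⁻¹ ^ m
    have hterm : ∀ n, (2:ℝ)⁻¹ ^ (n + m) ≤ f (n + m) (F x) := by
      intro n
      have h1 : δ (n + m) ≤ F x := (hδanti (Nat.le_add_left m n)).trans hmspec.le
      have h2 : max 0 (F x) = F x := max_eq_right (hF x).1
      have : min 1 (max 0 (F x) / δ (n + m)) = 1 := by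
        rw [h2, min_eq_left]
        rw [le_div_iff₀ (hδpos _), one_mul]
        exact h1
      rw [hfdef]; simp only [this, mul_one]; exact le_rfl
    have hshift : Summable (fun n : ℕ => (2:ℝ)⁻¹ ^ (n + m)) := by
      simpa [pow_add] using hsummgeo.mul_right ((2:ℝ)⁻¹ ^ m)
    have hlow : (2:ℝ)⁻¹ ^ m * 2 ≤ ∑' n, f n (F x) := by
      have hinj : Function.Injective (fun n : ℕ => n + m) := add_left_injective m
      have := Summable.tsum_le_tsum_of_inj (fun n : ℕ => n + m) hinj
        (fun c _ => (hf01 c (F x)).1) hterm hshift (hsumm (F x))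
      calc (2:ℝ)⁻¹ ^ m * 2 = ∑' n : ℕ, (2:ℝ)⁻¹ ^ (n + m) := by
            rw [show (fun n : ℕ => (2:ℝ)⁻¹ ^ (n + m)) = fun n : ℕ => (2:ℝ)⁻¹ ^ n * (2:ℝ)⁻¹ ^ m
              from funext fun n => (pow_add _ n m), tsum_mul_right, htsumgeo]; ring
        _ ≤ ∑' n, f n (F x) := this
    calc G x ≤ (2:ℝ)⁻¹ ^ m := hGm
      _ = 2⁻¹ * ((2:ℝ)⁻¹ ^ m * 2) := by ring
      _ ≤ α (F x) := mul_le_mul_of_nonneg_left hlow (by norm_num)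
end

section
/- Let X be a set and F, G : X → [0,1] with the ε-δ property (for all ε>0 there is δ>0 such that F(x) ≤ δ implies G(x) ≤ ε). Define g : [0,1] → [0,1] by g(t) = sup {G(x) : x ∈ X, F(x) ≤ t} (with sup ∅ = 0). Then g is increasing, G(x) ≤ g(F(x)) for all x, g(0) = 0, and g(t) → 0 as t → 0⁺. -/
theorem henson_intermediate {X : Type*} (F G : X → ℝ)
    (hF : ∀ x, F x ∈ Set.Icc (0:ℝ) 1) (hG : ∀ x, G x ∈ Set.Icc (0:ℝ) 1)
    (h : ∀ ε > (0:ℝ), ∃ δ > (0:ℝ), ∀ x, F x ≤ δ → G x ≤ ε) :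
    Monotone (fun t : ℝ => sSup (G '' {x | F x ≤ t})) ∧
    (∀ x, G x ≤ sSup (G '' {x' | F x' ≤ F x})) ∧
    sSup (G '' {x | F x ≤ 0}) = 0 ∧
    Filter.Tendsto (fun t : ℝ => sSup (G '' {x | F x ≤ t}))
      (nhdsWithin 0 (Set.Ioi 0)) (nhds 0) := by
  have hbdd : ∀ t : ℝ, BddAbove (G '' {x | F x ≤ t}) := by
    intro t
    exact ⟨1, fun y ⟨x, _, hx⟩ => hx ▸ (hG x).2⟩
  have hnn : ∀ t : ℝ, 0 ≤ sSup (G '' {x | F x ≤ t}) := by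
    intro t
    exact Real.sSup_nonneg (fun y ⟨x, _, hx⟩ => hx ▸ (hG x).1)
  have hmono : Monotone (fun t : ℝ => sSup (G '' {x | F x ≤ t})) := by
    intro s t hst
    refine Real.sSup_le (fun y ⟨x, hx, hxy⟩ => ?_) (hnn t)
    exact hxy ▸ le_csSup (hbdd t) ⟨x, le_trans hx hst, rfl⟩
  have hle : ∀ (ε : ℝ), 0 ≤ ε → ∀ t, (∀ x, F x ≤ t → G x ≤ ε) →
      sSup (G '' {x | F x ≤ t}) ≤ ε := by
    intro ε hε t ht
    exact Real.sSup_le (fun y ⟨x, hx, hxy⟩ => hxy ▸ ht x hx) hε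
  refine ⟨hmono, fun x => le_csSup (hbdd _) ⟨x, show F x ≤ F x from le_rfl, rfl⟩, ?_, ?_⟩
  · refine le_antisymm ?_ (hnn 0)
    refine hle 0 le_rfl 0 (fun x hx => ?_)
    refine le_of_forall_pos_le_add (fun ε hε => ?_)
    obtain ⟨δ, hδ, hδ'⟩ := h ε hε
    have := hδ' x (le_trans hx hδ.le)
    linarith
  · rw [Metric.tendsto_nhdsWithin_nhds]
    intro ε hε
    obtain ⟨δ, hδ, hδ'⟩ := h (ε/2) (by linarith)
    refine ⟨δ, hδ, fun t ht hdist => ?_⟩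
    have htδ : t ≤ δ := by
      rw [Real.dist_eq, abs_lt] at hdist
      linarith [hdist.2]
    have h1 : sSup (G '' {x | F x ≤ t}) ≤ ε/2 :=
      hle (ε/2) (by linarith) t (fun x hx => hδ' x (le_trans hx htδ))
    rw [Real.dist_eq, abs_lt]
    constructor <;> [linarith [hnn t]; linarith]
end

section
/- Let (Aⁿ,∂) be a metric space with ∂ bounded by 1, D ⊆ Aⁿ nonempty, P(x̄) = ∂(x̄,D) the distance function to D with range in [0,1], and α : [0,1] → [0,1] continuous increasing with α(0)=0 and ∂(x̄,D) ≤ α(P(x̄)) for all x̄. Define H(x̄) = inf over ȳ of min(α(P(ȳ)) + ∂(x̄,ȳ), 1). Then H(x̄) = ∂(x̄,D) for all x̄ ∈ Aⁿ. -/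
open Metric

section InfConvolution

variable {B : Type*} [PseudoMetricSpace B] {D : Set B} {f : B → ℝ} {c : ℝ}

theorem iInf_min_add_dist_eq_infDist (hD : D.Nonempty) (hle : ∀ y, infDist y D ≤ f y)
    (hzero : ∀ y ∈ D, f y = 0) {x : B} (hc : infDist x D ≤ c) :
    ⨅ y, min (f y + dist x y) c = infDist x D := by
  have : Nonempty B := ⟨hD.some⟩
  have : Nonempty D := hD.to_subtype
  have hlower : ∀ y, infDist x D ≤ min (f y + dist x y) c := fun y =>
    le_min ((infDist_le_infDist_add_dist).trans (by gcongr; exact hle y)) hc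
  have hbdd : BddBelow (Set.range fun y => min (f y + dist x y) c) :=
    ⟨infDist x D, Set.forall_mem_range.2 hlower⟩
  refine le_antisymm ?_ (le_ciInf hlower)
  rw [infDist_eq_iInf]
  refine le_ciInf fun d => (ciInf_le hbdd d).trans ?_
  calc min (f d + dist x d) c ≤ f d + dist x d := min_le_left _ _
    _ = dist x d := by rw [hzero d d.2, zero_add]

end InfConvolution

theorem definable_two_implies_one_general {B : Type*} [MetricSpace B]
    (hbound : ∀ x y : B, dist x y ≤ 1)
    (D : Set B) (hD : D.Nonempty)
    (P : B → ℝ) (hPdist : ∀ x, P x = Metric.infDist x D)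
    (α : ℝ → ℝ) (hα0 : α 0 = 0)
    (hdom : ∀ x, Metric.infDist x D ≤ α (P x)) :
    ∀ x : B, (⨅ y : B, min (α (P y) + dist x y) 1) = Metric.infDist x D := by
  intro x
  refine iInf_min_add_dist_eq_infDist hD hdom (fun y hy => ?_) ?_
  · rw [hPdist, infDist_zero_of_mem hy, hα0]
  · obtain ⟨d, hd⟩ := hD
    exact (infDist_le_dist_of_mem hd).trans (hbound x d)

theorem definable_two_implies_one {B : Type*} [MetricSpace B] [Nonempty B]
    (hbound : ∀ x y : B, dist x y ≤ 1)
    (D : Set B) (hD : D.Nonempty)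
    (P : B → ℝ) (hPdist : ∀ x, P x = Metric.infDist x D)
    (hPI : ∀ x, P x ∈ Set.Icc (0:ℝ) 1)
    (α : ℝ → ℝ) (hcont : ContinuousOn α (Set.Icc 0 1))
    (hmono : MonotoneOn α (Set.Icc 0 1)) (hα0 : α 0 = 0)
    (hdom : ∀ x, Metric.infDist x D ≤ α (P x)) :
    ∀ x : B, (⨅ y : B, min (α (P y) + dist x y) 1) = Metric.infDist x D :=
  definable_two_implies_one_general hbound D hD P hPdist α hα0 hdom
end

section
/- Let (A^k, ρ) and (Aⁿ, ∂) be metric spaces, D ⊆ Aⁿ nonempty, and ψ : A^k × Aⁿ → ℝ a function such that |ψ(z̄,x̄) − ψ(z̄,ȳ)| ≤ Δ(0, ∂(x̄,ȳ)) for a modulus Δ where r ↦ Δ(0,r) is increasing and continuous. Define Q(z̄) = inf over b̄ ∈ D of ψ(z̄,b̄) and Q_d(z̄) = inf over x̄ ∈ Aⁿ of (ψ(z̄,x̄) + Δ(0, ∂(x̄,D))). Then Q = Q_d. -/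
theorem quantify_over_definable {Z B : Type*} [MetricSpace Z] [MetricSpace B]
    (D : Set B) (hD : D.Nonempty)
    (ψ : Z → B → ℝ)
    (Δ : ℝ → ℝ) (hΔ0 : Δ 0 = 0) (hΔmono : Monotone Δ) (hΔcont : Continuous Δ)
    (hlip : ∀ (z : Z) (x y : B), |ψ z x - ψ z y| ≤ Δ (dist x y))
    (hbdd : ∃ C : ℝ, ∀ z x, C ≤ ψ z x) :
    ∀ z : Z, (⨅ b : D, ψ z b) = ⨅ x : B, (ψ z x + Δ (Metric.infDist x D)) := by
  intro z
  obtain ⟨C, hC⟩ := hbdd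
  haveI : Nonempty D := hD.to_subtype
  haveI : Nonempty B := ⟨hD.some⟩
  have hbd1 : BddBelow (Set.range fun b : D => ψ z b) := by
    refine ⟨C, ?_⟩; rintro _ ⟨b, rfl⟩; exact hC z b
  have hbd2 : BddBelow (Set.range fun x : B => ψ z x + Δ (Metric.infDist x D)) := by
    refine ⟨C, ?_⟩; rintro _ ⟨x, rfl⟩
    have h1 := hΔmono (Metric.infDist_nonneg (s := D) (x := x))
    have := hC z x
    rw [hΔ0] at h1
    simp only []
    linarith
  apply le_antisymm
  · apply le_ciInf; intro x
    refine le_of_forall_pos_le_add fun ε hε => ?_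
    set d := Metric.infDist x D with hd
    obtain ⟨δ, hδ, hδε⟩ := Metric.continuous_iff.mp hΔcont d ε hε
    obtain ⟨b, hbD, hb⟩ := (Metric.infDist_lt_iff hD).mp
      (show d < d + δ by linarith)
    have hdle : d ≤ dist x b := Metric.infDist_le_dist_of_mem hbD
    have hΔb : Δ (dist x b) < Δ d + ε := by
      have : dist (dist x b) d < δ := by
        rw [Real.dist_eq, abs_of_nonneg (by linarith)]
        linarith
      have h3 := hδε _ this
      rw [Real.dist_eq] at h3
      linarith [(abs_lt.mp h3).2]
    have h1 : (⨅ b : D, ψ z b) ≤ ψ z b := ciInf_le hbd1 ⟨b, hbD⟩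
    have h2 : ψ z b - ψ z x ≤ Δ (dist x b) := by
      have := hlip z b x
      rw [dist_comm]
      exact (abs_le.mp this).2.trans_eq rfl
    linarith
  · apply le_ciInf; intro b
    have hz : Metric.infDist (b : B) D = 0 := Metric.infDist_zero_of_mem b.2
    have := ciInf_le hbd2 (b : B)
    rw [hz, hΔ0] at this
    linarith
end

section
/- Let (Aⁿ, ∂) be a complete metric space with ∂ bounded by 1, and let P : Aⁿ → [0,1] be a function satisfying: (i) P(x̄) ≤ P(ȳ) + ∂(x̄,ȳ) for all x̄,ȳ (1-Lipschitz), and (ii) for every x̄ and every ε > 0 there exists ȳ with P(ȳ) < ε and ∂(x̄,ȳ) ≤ P(x̄) + ε. Then the zero-set D = {x̄ : P(x̄) = 0} is nonempty and P(x̄) = ∂(x̄,D) = inf over ā ∈ D of ∂(x̄,ā) for all x̄. -/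
open Filter Topology

section ApproximateWitness

variable {B : Type*} [MetricSpace B] {P : B → ℝ}

lemma nonneg_of_forall_exists_approx_witness
    (hwit : ∀ x : B, ∀ ε > (0:ℝ), ∃ y : B, P y < ε ∧ dist x y ≤ P x + ε) (x : B) :
    0 ≤ P x := by
  refine le_of_forall_pos_le_add fun ε hε => ?_
  obtain ⟨y, -, hxy⟩ := hwit x ε hε
  linarith [dist_nonneg (x := x) (y := y)]

/-- Iterating the witnesses with errors `ε / 2 ^ n` gives a sequence whose steps are summable,
and whose limit is a zero of `P` by continuity. -/
lemma exists_zero_dist_le_of_lt [CompleteSpace B] (hP : Continuous P)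
    (hwit : ∀ x : B, ∀ ε > (0:ℝ), ∃ y : B, P y < ε ∧ dist x y ≤ P x + ε)
    {y : B} {ε : ℝ} (hε : 0 < ε) (hy : P y < ε) :
    ∃ z, P z = 0 ∧ dist y z ≤ 3 * ε := by
  have hnonneg := nonneg_of_forall_exists_approx_witness hwit
  choose! w hwP hwd using hwit
  let u : ℕ → B := fun n => Nat.rec y (fun n v => w v (ε / 2 ^ (n + 1))) n
  have hu_succ (n : ℕ) : u (n + 1) = w (u n) (ε / 2 ^ (n + 1)) := rfl
  have hPu (n : ℕ) : P (u n) < ε / 2 ^ n := by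
    cases n with
    | zero => simpa [u] using hy
    | succ n => exact hu_succ n ▸ hwP _ _ (by positivity)
  have hstep (n : ℕ) : dist (u n) (u (n + 1)) ≤ 3 * ε / 2 / 2 ^ n :=
    calc dist (u n) (u (n + 1)) ≤ P (u n) + ε / 2 ^ (n + 1) :=
          hu_succ n ▸ hwd _ _ (by positivity)
      _ ≤ ε / 2 ^ n + ε / 2 ^ (n + 1) := by linarith [hPu n]
      _ = 3 * ε / 2 / 2 ^ n := by rw [pow_succ]; field_simp; ring
  obtain ⟨z, hz⟩ := cauchySeq_tendsto_of_complete (cauchySeq_of_le_geometric_two hstep)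
  have hPu_zero : Tendsto (P ∘ u) atTop (𝓝 0) := by
    have hgeom : Tendsto (fun n : ℕ => ε / 2 ^ n) atTop (𝓝 0) :=
      tendsto_const_nhds.div_atTop (tendsto_pow_atTop_atTop_of_one_lt one_lt_two)
    exact squeeze_zero (fun n => hnonneg _) (fun n => (hPu n).le) hgeom
  exact ⟨z, tendsto_nhds_unique ((hP.tendsto z).comp hz) hPu_zero,
    dist_le_of_le_geometric_two_of_tendsto₀ hstep hz⟩

lemma exists_zero_dist_le_add [CompleteSpace B] (hP : Continuous P)
    (hwit : ∀ x : B, ∀ ε > (0:ℝ), ∃ y : B, P y < ε ∧ dist x y ≤ P x + ε)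
    (x : B) {ε : ℝ} (hε : 0 < ε) :
    ∃ z, P z = 0 ∧ dist x z ≤ P x + 4 * ε := by
  obtain ⟨y, hy, hxy⟩ := hwit x ε hε
  obtain ⟨z, hz, hyz⟩ := exists_zero_dist_le_of_lt hP hwit hε hy
  exact ⟨z, hz, by linarith [dist_triangle x y z]⟩

end ApproximateWitness

theorem distance_predicate_characterization_general {B : Type*} [MetricSpace B]
    [CompleteSpace B] [Nonempty B]
    (P : B → ℝ)
    (hlip : ∀ x y : B, P x ≤ P y + dist x y)
    (hwit : ∀ x : B, ∀ ε > (0:ℝ), ∃ y : B, P y < ε ∧ dist x y ≤ P x + ε) :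
    {x : B | P x = 0}.Nonempty ∧
    ∀ x : B, P x = Metric.infDist x {y : B | P y = 0} := by
  have hP : Continuous P := (LipschitzWith.of_le_add hlip).continuous
  have hne : {x : B | P x = 0}.Nonempty := by
    obtain ⟨z, hz, -⟩ := exists_zero_dist_le_add hP hwit (Classical.arbitrary B) one_pos
    exact ⟨z, hz⟩
  refine ⟨hne, fun x => le_antisymm ?_ ?_⟩
  · refine (Metric.le_infDist hne).2 fun y (hy : P y = 0) => ?_
    linarith [hlip x y]
  · refine le_of_forall_pos_le_add fun ε hε => ?_
    obtain ⟨z, hz, hxz⟩ := exists_zero_dist_le_add hP hwit x (by positivity : 0 < ε / 4)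
    calc Metric.infDist x {y : B | P y = 0} ≤ dist x z := Metric.infDist_le_dist_of_mem hz
      _ ≤ P x + ε := by linarith

theorem distance_predicate_characterization {B : Type*} [MetricSpace B]
    [CompleteSpace B] [Nonempty B]
    (hbound : ∀ x y : B, dist x y ≤ 1)
    (P : B → ℝ) (hPI : ∀ x, P x ∈ Set.Icc (0:ℝ) 1)
    (hlip : ∀ x y : B, P x ≤ P y + dist x y)
    (hwit : ∀ x : B, ∀ ε > (0:ℝ), ∃ y : B, P y < ε ∧ dist x y ≤ P x + ε) :
    {x : B | P x = 0}.Nonempty ∧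
    ∀ x : B, P x = Metric.infDist x {y : B | P y = 0} :=
  distance_predicate_characterization_general P hlip hwit
end
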